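/- For every real irrational number ξ, the density exponent ν(ξ) takes only the value 0 or the value +∞; more precisely, ν(ξ) = +∞ if ξ is a Liouville number and ν(ξ) = 0 otherwise. -/

import Mathlib

/-!
Write `‖x‖ = intDist x` for the distance to the nearest integer. An admissible sequence `u`
eventually has `‖u_{n+1} ξ‖ ≤ r ‖u_n ξ‖` and `u_{n+1} ≤ b u_n` with `r < 1`; since then
`‖u_{n+1} ξ‖ < ‖u_n ξ‖`, the determinant `u_n v_{n+1} - u_{n+1} v_n` of consecutive nearest-integer
approximations does not vanish. Hence
* of two consecutive approximations with `‖u_n ξ‖ ≤ 1 / (2q)`, one differs from `p / q`, which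
  bounds `|ξ - p / q|` below by a power of `q`, because `u_n ‖u_n ξ‖ ^ T` stays bounded once
  `b r ^ T ≤ 1`: ξ is not Liouville;
* `1 ≤ u_n ‖u_{n+1} ξ‖ + u_{n+1} ‖u_n ξ‖ ≤ (r + b) u_n ‖u_n ξ‖`, whereas `u_n ‖u_n ξ‖` decays
  geometrically if `r b < 1`: so `α β ≥ 1`, i.e. `ν(ξ) ≥ 0`.

Conversely, if `‖q ξ‖ ≥ c / q ^ M` for all `q > 0`, Dirichlet's theorem and a walk along the
multiples of a suitable `q` show that every window `A ≤ ‖n ξ‖ ≤ B` is met by some `n` in every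
interval of length `O((B - A) ^ (-M-1))`. Choosing `u_{n+1}` just above `u_n / (1 - s) ^ (2M+2)`
with `(1 - s) ^ 2 ‖u_n ξ‖ ≤ ‖u_{n+1} ξ‖ ≤ (1 - s) ‖u_n ξ‖` gives `α ≤ 1 - s` and
`β ≤ (1 + s) / (1 - s) ^ (2M+2)`, so `ν(ξ) ≤ 0` as `s → 0`.
-/

open Filter Topology

/-- The irrationality exponent of a real number, as an extended real:
the infimum of all real `μ` such that `|ξ - p/q| > 1/q^μ` for all integers `p, q`
with `q` sufficiently large (`⊤` if no such real `μ` exists). -/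
noncomputable def irrationalityExponent (ξ : ℝ) : EReal :=
  sInf {x : EReal | ∃ μ : ℝ, x = (μ : EReal) ∧
    ∀ᶠ q : ℕ in atTop, ∀ p : ℤ, |ξ - (p : ℝ) / (q : ℝ)| > 1 / (q : ℝ) ^ μ}

/-- `α_ξ(u)`: the limsup of `|u_{n+1} ξ - v_{n+1}| / |u_n ξ - v_n|`, where `v_n` is the
nearest integer to `u_n ξ`, computed in the extended reals. -/
noncomputable def alphaExp (ξ : ℝ) (u : ℕ → ℕ) : EReal :=
  limsup (fun n =>
    ((|(u (n + 1) : ℝ) * ξ - (round ((u (n + 1) : ℝ) * ξ) : ℝ)| /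
      |(u n : ℝ) * ξ - (round ((u n : ℝ) * ξ) : ℝ)| : ℝ) : EReal)) atTop

/-- `β(u)`: the limsup of `u_{n+1} / u_n`, computed in the extended reals. -/
noncomputable def betaExp (u : ℕ → ℕ) : EReal :=
  limsup (fun n => (((u (n + 1) : ℝ) / (u n : ℝ) : ℝ) : EReal)) atTop

/-- The density exponent `ν(ξ)`: the infimum of `log √(α_ξ(u) β(u))` over all
non-decreasing sequences `u` of positive integers with `α_ξ(u) < 1` and `β(u) < +∞`
(`⊤` if there is no such sequence). -/
noncomputable def densityExponent (ξ : ℝ) : EReal :=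
  sInf {x : EReal | ∃ u : ℕ → ℕ, Monotone u ∧ (∀ n, 0 < u n) ∧
    alphaExp ξ u < 1 ∧ betaExp u < ⊤ ∧
    x = ((Real.log (Real.sqrt ((alphaExp ξ u).toReal * (betaExp u).toReal)) : ℝ) : EReal)}

noncomputable def intDist (x : ℝ) : ℝ := |x - round x|

lemma intDist_nonneg (x : ℝ) : 0 ≤ intDist x := abs_nonneg _

lemma intDist_le_half (x : ℝ) : intDist x ≤ 1 / 2 := abs_sub_round x

lemma intDist_add_intCast (x : ℝ) (m : ℤ) : intDist (x + m) = intDist x := by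
  simp [intDist, round_add_intCast]

lemma intDist_eq_abs_sub_intCast {x : ℝ} {m : ℤ} (h : |x - m| < 1 / 2) :
    intDist x = |x - m| := by
  rw [abs_lt] at h
  rw [intDist, round_eq_iff (n := m) |>.2 ⟨by linarith, by linarith⟩]

lemma Irrational.intDist_natCast_mul_pos {ξ : ℝ} (hξ : Irrational ξ) {q : ℕ} (hq : 0 < q) :
    0 < intDist (q * ξ) :=
  abs_pos.2 (sub_ne_zero.2 ((hξ.natCast_mul hq.ne').ne_int _))

section Determinant

variable {ξ : ℝ} {m m' : ℕ}

lemma natCast_mul_round_ne (hm : 0 < m) (hmm' : m ≤ m')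
    (hε : intDist (m' * ξ) < intDist (m * ξ)) :
    (m : ℤ) * round (m' * ξ) ≠ m' * round (m * ξ) := by
  intro h
  have hreal : (m : ℝ) * round (m' * ξ) = m' * round (m * ξ) := by exact_mod_cast h
  have key : (m' : ℝ) * intDist (m * ξ) = m * intDist (m' * ξ) := by
    have e : (m' : ℝ) * (m * ξ - round (m * ξ)) = m * (m' * ξ - round (m' * ξ)) := by
      linear_combination hreal
    simpa only [abs_mul, Nat.abs_cast, intDist] using congrArg abs e
  have h1 : (m : ℝ) * intDist (m * ξ) ≤ m' * intDist (m * ξ) :=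
    mul_le_mul_of_nonneg_right (by exact_mod_cast hmm') (intDist_nonneg _)
  have h2 : (m : ℝ) * intDist (m' * ξ) < m * intDist (m * ξ) :=
    mul_lt_mul_of_pos_left hε (by exact_mod_cast hm)
  linarith

lemma one_le_mul_intDist_add_mul_intDist (hm : 0 < m) (hmm' : m ≤ m')
    (hε : intDist (m' * ξ) < intDist (m * ξ)) :
    1 ≤ m * intDist (m' * ξ) + m' * intDist (m * ξ) := by
  calc (1 : ℝ) ≤ |((m * round (m' * ξ) - m' * round (m * ξ) : ℤ) : ℝ)| := by
        exact_mod_cast Int.one_le_abs (sub_ne_zero.2 (natCast_mul_round_ne hm hmm' hε))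
    _ = |m' * (m * ξ - round (m * ξ)) - m * (m' * ξ - round (m' * ξ))| := by
      push_cast; ring_nf
    _ ≤ |m' * (m * ξ - round (m * ξ))| + |m * (m' * ξ - round (m' * ξ))| := abs_sub _ _
    _ = m * intDist (m' * ξ) + m' * intDist (m * ξ) := by
      simp only [abs_mul, Nat.abs_cast, intDist]; ring

lemma one_div_two_mul_le_abs_sub_div {q : ℕ} {p : ℤ} (hm : 0 < m) (hq : 0 < q)
    (hεq : intDist (m * ξ) ≤ 1 / (2 * q)) (hne : p * m ≠ q * round (m * ξ)) :
    1 / (2 * m * q) ≤ |ξ - p / q| := by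
  have hm0 : (0 : ℝ) < m := by exact_mod_cast hm
  have hq0 : (0 : ℝ) < q := by exact_mod_cast hq
  have hdet : (1 : ℝ) ≤ |((q * round (m * ξ) - p * m : ℤ) : ℝ)| := by
    exact_mod_cast Int.one_le_abs (sub_ne_zero.2 hne.symm)
  have hqε : q * intDist (m * ξ) ≤ 1 / 2 := by
    rw [le_div_iff₀ (by positivity)] at hεq
    linarith
  have hsplit : |((q * round (m * ξ) - p * m : ℤ) : ℝ)| ≤
      m * q * |ξ - p / q| + q * intDist (m * ξ) :=
    calc |((q * round (m * ξ) - p * m : ℤ) : ℝ)|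
        = |m * q * (ξ - p / q) - q * (m * ξ - round (m * ξ))| := by
          push_cast; congr 1; field_simp; ring
      _ ≤ |m * q * (ξ - p / q)| + |q * (m * ξ - round (m * ξ))| := abs_sub _ _
      _ = m * q * |ξ - p / q| + q * intDist (m * ξ) := by
          simp only [abs_mul, Nat.abs_cast, intDist]
  rw [div_le_iff₀ (by positivity)]
  linarith

lemma one_div_two_mul_le_abs_sub_div_of_intDist_lt {q : ℕ} (hm : 0 < m) (hmm' : m ≤ m')
    (hε : intDist (m' * ξ) < intDist (m * ξ)) (hq : 0 < q)
    (hεq : intDist (m * ξ) ≤ 1 / (2 * q)) (p : ℤ) :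
    1 / (2 * m' * q) ≤ |ξ - p / q| := by
  by_cases h : p * m = q * round (m * ξ)
  · refine one_div_two_mul_le_abs_sub_div (hm.trans_le hmm') hq (hε.le.trans hεq) fun h' => ?_
    have hq0 : (q : ℤ) ≠ 0 := by exact_mod_cast hq.ne'
    refine natCast_mul_round_ne hm hmm' hε (mul_left_cancel₀ hq0 ?_)
    linear_combination (-(m : ℤ)) * h' + (m' : ℤ) * h
  · refine le_trans ?_ (one_div_two_mul_le_abs_sub_div hm hq hεq h)
    have : (0 : ℝ) < m := by exact_mod_cast hm
    gcongr

end Determinant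

lemma tendsto_zero_of_succ_le_mul {f : ℕ → ℝ} {c : ℝ} (hc0 : 0 ≤ c) (hc1 : c < 1)
    (hf0 : ∀ n, 0 ≤ f n) (hf : ∀ n, f (n + 1) ≤ c * f n) : Tendsto f atTop (𝓝 0) := by
  have hgeom := (tendsto_pow_atTop_nhds_zero_of_lt_one hc0 hc1).mul_const (f 0)
  rw [zero_mul] at hgeom
  exact squeeze_zero hf0 (fun n => le_geom hc0 n fun k _ => hf k) hgeom

lemma mul_pow_le_of_succ_le_mul {x y : ℕ → ℝ} {a b : ℝ} {T : ℕ} (hx0 : ∀ n, 0 ≤ x n)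
    (hy0 : ∀ n, 0 ≤ y n) (hx : ∀ n, x (n + 1) ≤ a * x n) (hy : ∀ n, y (n + 1) ≤ b * y n)
    (hab : a * b ^ T ≤ 1) (n : ℕ) : x n * y n ^ T ≤ x 0 * y 0 ^ T := by
  induction n with
  | zero => rfl
  | succ n ih =>
    have hax : 0 ≤ a * x n := (hx0 _).trans (hx n)
    calc x (n + 1) * y (n + 1) ^ T ≤ (a * x n) * (b * y n) ^ T :=
          mul_le_mul (hx n) (pow_le_pow_left₀ (hy0 _) (hy n) T) (pow_nonneg (hy0 _) T) hax
      _ = (a * b ^ T) * (x n * y n ^ T) := by ring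
      _ ≤ x n * y n ^ T := mul_le_of_le_one_left (mul_nonneg (hx0 n) (pow_nonneg (hy0 n) T)) hab
      _ ≤ x 0 * y 0 ^ T := ih

lemma exists_succ_le_lt {α : Type*} [LinearOrder α] {f : ℕ → α} {t : α} (h0 : t < f 0)
    (h : ∃ n, f n ≤ t) : ∃ n, f (n + 1) ≤ t ∧ t < f n := by
  by_contra! H
  obtain ⟨n, hn⟩ := h
  have hlt : ∀ k, t < f k := by
    intro k
    induction k with
    | zero => exact h0
    | succ k ih => exact lt_of_not_ge fun hk => (H k hk).not_gt ih
  exact (hlt n).not_ge hn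

lemma irrationalityExponent_ne_top_iff {ξ : ℝ} : irrationalityExponent ξ ≠ ⊤ ↔
    ∃ μ : ℝ, ∀ᶠ q : ℕ in atTop, ∀ p : ℤ, |ξ - (p : ℝ) / (q : ℝ)| > 1 / (q : ℝ) ^ μ := by
  constructor
  · intro h
    by_contra H
    refine h (sInf_eq_top.2 ?_)
    rintro _ ⟨μ, rfl, hμ⟩
    exact (H ⟨μ, hμ⟩).elim
  · rintro ⟨μ, hμ⟩
    exact ne_top_of_le_ne_top (EReal.coe_ne_top μ) (sInf_le ⟨μ, rfl, hμ⟩)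

lemma zero_le_alphaExp (ξ : ℝ) (u : ℕ → ℕ) : 0 ≤ alphaExp ξ u :=
  le_limsup_of_frequently_le (Frequently.of_forall fun _ =>
    EReal.coe_nonneg.2 (div_nonneg (abs_nonneg _) (abs_nonneg _))) (by isBoundedDefault)

section Exponents

variable {ξ : ℝ} {u : ℕ → ℕ}

lemma one_le_betaExp (hu : Monotone u) (hpos : ∀ n, 0 < u n) : 1 ≤ betaExp u :=
  le_limsup_of_frequently_le (Frequently.of_forall fun n => by
    exact_mod_cast (one_le_div (by exact_mod_cast hpos n)).2
      (by exact_mod_cast hu n.le_succ)) (by isBoundedDefault)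

lemma eventually_le_of_alphaExp_lt_of_betaExp_lt (hξ : Irrational ξ) (hpos : ∀ n, 0 < u n)
    {r b : ℝ} (hα : alphaExp ξ u < r) (hβ : betaExp u < b) :
    ∀ᶠ n in atTop, intDist (u (n + 1) * ξ) ≤ r * intDist (u n * ξ) ∧
      (u (n + 1) : ℝ) ≤ b * u n := by
  filter_upwards [eventually_lt_of_limsup_lt hα, eventually_lt_of_limsup_lt hβ] with n hαn hβn
  constructor
  · rw [← div_le_iff₀ (hξ.intDist_natCast_mul_pos (hpos n))]
    exact_mod_cast hαn.le
  · rw [← div_le_iff₀ (by exact_mod_cast hpos n)]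
    exact_mod_cast hβn.le

end Exponents

section GeometricSequences

variable {ξ r b : ℝ} {u : ℕ → ℕ}

lemma exists_forall_mul_intDist_pow_le (hpos : ∀ n, 0 < u n) (hr : r < 1)
    (hε : ∀ n, intDist (u (n + 1) * ξ) ≤ r * intDist (u n * ξ))
    (hb : ∀ n, (u (n + 1) : ℝ) ≤ b * u n) :
    ∃ T : ℕ, ∀ n, u n * intDist (u n * ξ) ^ T ≤ u 0 * intDist (u 0 * ξ) ^ T := by
  have hu0 : ∀ n, (0 : ℝ) < u n := fun n => by exact_mod_cast hpos n
  have hb0 : 0 < b := pos_of_mul_pos_left ((hu0 1).trans_le (hb 0)) (hu0 0).le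
  obtain ⟨T, hT⟩ := exists_pow_lt_of_lt_one (inv_pos.2 hb0) hr
  refine ⟨T, mul_pow_le_of_succ_le_mul (fun n => (hu0 n).le) (fun n => intDist_nonneg _)
    hb hε ?_⟩
  rw [← le_div_iff₀' hb0, one_div]
  exact hT.le

lemma one_div_pow_lt_one_div_two_mul_mul {q m B : ℝ} {T : ℕ} (hB : 0 ≤ B) (hm : 0 < m)
    (hmB : m ≤ B * q ^ T) (hq : 2 * B < q) : 1 / q ^ (T + 2) < 1 / (2 * m * q) := by
  have hq0 : 0 < q := by linarith
  rw [div_lt_div_iff₀ (by positivity) (by positivity), one_mul, one_mul]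
  calc 2 * m * q ≤ 2 * B * q ^ T * q := by rw [mul_assoc 2 B]; gcongr
    _ < q * q ^ T * q := by gcongr
    _ = q ^ (T + 2) := by ring

lemma irrationalityExponent_ne_top_of_forall (hξ : Irrational ξ) (hu : Monotone u)
    (hpos : ∀ n, 0 < u n) (hr : r < 1)
    (hε : ∀ n, intDist (u (n + 1) * ξ) ≤ r * intDist (u n * ξ))
    (hb : ∀ n, (u (n + 1) : ℝ) ≤ b * u n) : irrationalityExponent ξ ≠ ⊤ := by
  set ε : ℕ → ℝ := fun n => intDist (u n * ξ)
  have hε0 : ∀ n, 0 < ε n := fun n => hξ.intDist_natCast_mul_pos (hpos n)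
  have hu0 : ∀ n, (0 : ℝ) < u n := fun n => by exact_mod_cast hpos n
  have hr0 : 0 < r := pos_of_mul_pos_left ((hε0 1).trans_le (hε 0)) (hε0 0).le
  have hb0 : 0 < b := pos_of_mul_pos_left ((hu0 1).trans_le (hb 0)) (hu0 0).le
  have hlim : Tendsto ε atTop (𝓝 0) :=
    tendsto_zero_of_succ_le_mul hr0.le hr (fun n => (hε0 n).le) hε
  obtain ⟨T, hT⟩ := exists_forall_mul_intDist_pow_le hpos hr hε hb
  set C := u 0 * ε 0 ^ T
  have hC0 : 0 ≤ b ^ 2 * C * 2 ^ T := by have := hu0 0; have := hε0 0; positivity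
  refine irrationalityExponent_ne_top_iff.2 ⟨(T + 2 : ℕ), ?_⟩
  filter_upwards [(tendsto_natCast_atTop_atTop (R := ℝ)).eventually_gt_atTop
    (max (2 * (b ^ 2 * C * 2 ^ T)) (1 / (2 * ε 0)))] with q hq p
  have hq0 : (0 : ℝ) < q := by
    linarith [le_max_left (2 * (b ^ 2 * C * 2 ^ T)) (1 / (2 * ε 0))]
  have hqε : 1 / (2 * q) < ε 0 := by
    have := (le_max_right _ _).trans_lt hq
    rw [div_lt_iff₀ (mul_pos two_pos (hε0 0))] at this
    rw [div_lt_iff₀ (by positivity)]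
    linarith
  -- `u (n + 1)`, `u (n + 2)` approximate within `1 / (2q)`, and `u (n + 2) = O(q ^ T)` because
  -- `‖u n ξ‖ > 1 / (2q)`.
  obtain ⟨n, hn1, hn⟩ :=
    exists_succ_le_lt hqε (hlim.eventually (eventually_le_nhds (by positivity))).exists
  have hun : (u n : ℝ) ≤ C * (2 * q) ^ T := by
    have h := (mul_le_mul_of_nonneg_left (pow_le_pow_left₀ (by positivity) hn.le T)
      (hu0 n).le).trans (hT n)
    rwa [div_pow, one_pow, mul_one_div, div_le_iff₀ (by positivity)] at h
  have hun2 : (u (n + 2) : ℝ) ≤ b ^ 2 * C * 2 ^ T * q ^ T :=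
    calc (u (n + 2) : ℝ) ≤ b * (b * u n) :=
          (hb _).trans (mul_le_mul_of_nonneg_left (hb n) hb0.le)
      _ ≤ b * (b * (C * (2 * q) ^ T)) := by gcongr
      _ = b ^ 2 * C * 2 ^ T * q ^ T := by ring
  rw [Real.rpow_natCast]
  refine (one_div_pow_lt_one_div_two_mul_mul hC0 (hu0 _) hun2
    ((le_max_left _ _).trans_lt hq)).trans_le ?_
  exact
    (one_div_two_mul_le_abs_sub_div_of_intDist_lt (hpos (n + 1)) (hu (n + 1).le_succ)
      ((hε (n + 1)).trans_lt (mul_lt_of_lt_one_left (hε0 _) hr)) (by exact_mod_cast hq0) hn1 p)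

lemma one_le_mul_of_forall (hξ : Irrational ξ) (hu : Monotone u) (hpos : ∀ n, 0 < u n)
    (hr : r < 1) (hε : ∀ n, intDist (u (n + 1) * ξ) ≤ r * intDist (u n * ξ))
    (hb : ∀ n, (u (n + 1) : ℝ) ≤ b * u n) : 1 ≤ r * b := by
  set ε : ℕ → ℝ := fun n => intDist (u n * ξ)
  have hε0 : ∀ n, 0 < ε n := fun n => hξ.intDist_natCast_mul_pos (hpos n)
  have hu0 : ∀ n, (0 : ℝ) < u n := fun n => by exact_mod_cast hpos n
  have hr0 : 0 < r := pos_of_mul_pos_left ((hε0 1).trans_le (hε 0)) (hε0 0).le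
  have hb0 : 0 < b := pos_of_mul_pos_left ((hu0 1).trans_le (hb 0)) (hu0 0).le
  by_contra! hrb
  set P : ℕ → ℝ := fun n => u n * ε n
  have hP : ∀ n, P (n + 1) ≤ (r * b) * P n := fun n =>
    calc P (n + 1) ≤ (b * u n) * (r * ε n) :=
          mul_le_mul (hb n) (hε n) (hε0 _).le ((hu0 _).le.trans (hb n))
      _ = (r * b) * P n := by ring
  have hP1 : ∀ n, 1 ≤ (r + b) * P n := fun n =>
    calc 1 ≤ u n * ε (n + 1) + u (n + 1) * ε n :=
          one_le_mul_intDist_add_mul_intDist (hpos n) (hu n.le_succ)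
            ((hε n).trans_lt (mul_lt_of_lt_one_left (hε0 n) hr))
      _ ≤ u n * (r * ε n) + (b * u n) * ε n :=
          add_le_add (mul_le_mul_of_nonneg_left (hε n) (hu0 n).le)
            (mul_le_mul_of_nonneg_right (hb n) (hε0 n).le)
      _ = (r + b) * P n := by ring
  have hlim := tendsto_zero_of_succ_le_mul (by positivity) hrb
    (fun n => (mul_pos (hu0 n) (hε0 n)).le) hP
  obtain ⟨n, hn⟩ :=
    (hlim.eventually (gt_mem_nhds (by positivity : (0 : ℝ) < 1 / (r + b)))).exists
  rw [lt_div_iff₀ (by positivity)] at hn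
  linarith [hP1 n]

end GeometricSequences

section Admissible

variable {ξ : ℝ} {u : ℕ → ℕ}

lemma irrationalityExponent_ne_top_of_admissible (hξ : Irrational ξ) (hu : Monotone u)
    (hpos : ∀ n, 0 < u n) (hα : alphaExp ξ u < 1) (hβ : betaExp u < ⊤) :
    irrationalityExponent ξ ≠ ⊤ := by
  obtain ⟨r, hαr, hr1⟩ := EReal.lt_iff_exists_real_btwn.1 hα
  obtain ⟨b, hβb, -⟩ := EReal.lt_iff_exists_real_btwn.1 hβ
  obtain ⟨N, hN⟩ :=
    eventually_atTop.1 (eventually_le_of_alphaExp_lt_of_betaExp_lt hξ hpos hαr hβb)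
  exact irrationalityExponent_ne_top_of_forall (u := fun n => u (N + n)) hξ
    (hu.comp fun _ _ h => Nat.add_le_add_left h N) (fun n => hpos _) (by exact_mod_cast hr1)
    (fun n => (hN (N + n) (Nat.le_add_right N n)).1)
    (fun n => (hN (N + n) (Nat.le_add_right N n)).2)

lemma one_le_toReal_alphaExp_mul_toReal_betaExp (hξ : Irrational ξ) (hu : Monotone u)
    (hpos : ∀ n, 0 < u n) (hα : alphaExp ξ u < 1) (hβ : betaExp u < ⊤) :
    1 ≤ (alphaExp ξ u).toReal * (betaExp u).toReal := by
  have hα0 := zero_le_alphaExp ξ u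
  have hβ1 := one_le_betaExp hu hpos
  set a := (alphaExp ξ u).toReal
  set b := (betaExp u).toReal
  have ha : alphaExp ξ u = a :=
    (EReal.coe_toReal hα.ne_top (ne_bot_of_le_ne_bot EReal.zero_ne_bot hα0)).symm
  have hb : betaExp u = b :=
    (EReal.coe_toReal hβ.ne (ne_bot_of_gt (zero_lt_one.trans_le hβ1))).symm
  have ha0 : 0 ≤ a := by rw [ha] at hα0; exact_mod_cast hα0
  have ha1 : a < 1 := by rw [ha] at hα; exact_mod_cast hα
  have hb1 : 1 ≤ b := by rw [hb] at hβ1; exact_mod_cast hβ1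
  by_contra! hab
  have hb0 : 0 < b := zero_lt_one.trans_le hb1
  obtain ⟨a', haa', ha'⟩ := exists_between (lt_min ha1 ((lt_div_iff₀ hb0).2 hab))
  have ha'0 : 0 < a' := ha0.trans_lt haa'
  have ha'b : b < 1 / a' := by
    rw [lt_div_iff₀ ha'0, mul_comm]
    exact (lt_div_iff₀ hb0).1 (ha'.trans_le (min_le_right _ _))
  obtain ⟨b', hbb', hb'⟩ := exists_between ha'b
  have hαa' : alphaExp ξ u < a' := by rw [ha]; exact_mod_cast haa'
  have hβb' : betaExp u < b' := by rw [hb]; exact_mod_cast hbb'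
  obtain ⟨N, hN⟩ :=
    eventually_atTop.1 (eventually_le_of_alphaExp_lt_of_betaExp_lt hξ hpos hαa' hβb')
  have := one_le_mul_of_forall (u := fun n => u (N + n)) hξ
    (hu.comp fun _ _ h => Nat.add_le_add_left h N) (fun n => hpos _)
    (ha'.trans_le (min_le_left _ _))
    (fun n => (hN (N + n) (Nat.le_add_right N n)).1)
    (fun n => (hN (N + n) (Nat.le_add_right N n)).2)
  rw [lt_div_iff₀ ha'0, mul_comm] at hb'
  linarith

end Admissible

lemma exists_pos_forall_le_of_eventually_le {f : ℕ → ℝ} {a : ℝ} (ha : 0 < a)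
    (hf : ∀ n, 0 < n → 0 < f n) (h : ∀ᶠ n in atTop, a ≤ f n) :
    ∃ c > 0, ∀ n, 0 < n → c ≤ f n := by
  obtain ⟨N, hN⟩ := eventually_atTop.1 h
  set S := insert a ((Finset.Ioo 0 N).image f)
  have hS : S.Nonempty := Finset.insert_nonempty _ _
  refine ⟨S.min' hS, ?_, fun n hn => ?_⟩
  · rcases Finset.mem_insert.1 (S.min'_mem hS) with hmin | hmin
    · exact hmin ▸ ha
    · obtain ⟨n, hn, hfn⟩ := Finset.mem_image.1 hmin
      exact hfn ▸ hf n (Finset.mem_Ioo.1 hn).1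
  · rcases lt_or_ge n N with hnN | hnN
    · exact S.min'_le _ (Finset.mem_insert_of_mem
        (Finset.mem_image_of_mem f (Finset.mem_Ioo.2 ⟨hn, hnN⟩)))
    · exact (S.min'_le _ (Finset.mem_insert_self _ _)).trans (hN n hnN)

lemma exists_forall_div_pow_le_intDist {ξ : ℝ} (hξ : Irrational ξ)
    (hI : irrationalityExponent ξ ≠ ⊤) :
    ∃ c > 0, ∃ M : ℕ, ∀ q : ℕ, 0 < q → c / (q : ℝ) ^ M ≤ intDist (q * ξ) := by
  obtain ⟨μ, hμ⟩ := irrationalityExponent_ne_top_iff.1 hI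
  have hev : ∀ᶠ q : ℕ in atTop, 1 ≤ (q : ℝ) ^ ⌈μ⌉₊ * intDist (q * ξ) := by
    filter_upwards [hμ, eventually_ge_atTop 1] with q hq hq1
    have hq1' : (1 : ℝ) ≤ q := by exact_mod_cast hq1
    have hq0 : (0 : ℝ) < q := by positivity
    have hpow : (q : ℝ) ^ μ ≤ (q : ℝ) ^ ⌈μ⌉₊ := by
      rw [← Real.rpow_natCast]
      exact Real.rpow_le_rpow_of_exponent_le hq1' (Nat.le_ceil μ)
    have hdist : intDist (q * ξ) = q * |ξ - round (q * ξ) / q| := by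
      rw [intDist, show (q : ℝ) * ξ - round (q * ξ) = q * (ξ - round (q * ξ) / q) by
        field_simp, abs_mul, abs_of_pos hq0]
    rw [← div_le_iff₀' (by positivity)]
    calc 1 / (q : ℝ) ^ ⌈μ⌉₊ ≤ 1 / (q : ℝ) ^ μ := one_div_le_one_div_of_le (by positivity) hpow
      _ ≤ |ξ - round (q * ξ) / q| := (hq (round (q * ξ))).le
      _ ≤ intDist (q * ξ) := by rw [hdist]; exact le_mul_of_one_le_left (abs_nonneg _) hq1'
  obtain ⟨c, hc, hcq⟩ := exists_pos_forall_le_of_eventually_le one_pos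
    (fun q hq => mul_pos (by positivity) (hξ.intDist_natCast_mul_pos hq)) hev
  refine ⟨c, hc, ⌈μ⌉₊, fun q hq => ?_⟩
  rw [div_le_iff₀' (by positivity)]
  exact hcq q hq

lemma exists_nat_add_mul_sub_intCast_mem_Icc {y γ A B : ℝ} (hγ : 0 < γ) (hγAB : γ ≤ B - A) :
    ∃ j : ℕ, (j : ℝ) ≤ 1 / γ + 1 ∧ ∃ n : ℤ, y + j * γ - n ∈ Set.Icc A B := by
  set n := ⌈y - A⌉
  have h0 : 0 ≤ n + A - y := by linarith [Int.le_ceil (y - A)]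
  have h1 : n + A - y < 1 := by linarith [Int.ceil_lt_add_one (y - A)]
  set j := ⌈(n + A - y) / γ⌉₊
  have hj0 : n + A - y ≤ j * γ := (div_le_iff₀ hγ).1 (Nat.le_ceil _)
  have hj1 : (j : ℝ) < (n + A - y) / γ + 1 := Nat.ceil_lt_add_one (div_nonneg h0 hγ.le)
  have hj1' : j * γ < n + A - y + γ := by
    have := mul_lt_mul_of_pos_right hj1 hγ
    rwa [add_mul, div_mul_cancel₀ _ hγ.ne', one_mul] at this
  refine ⟨j, hj1.le.trans ?_, n, by linarith, by linarith⟩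
  gcongr

/-- Modulo `1`, `x + j θ` moves monotonically by steps `σ = θ - round θ` with `|σ| = ‖θ‖`, which
is at most the width of the window. -/
lemma exists_nat_intDist_add_mul_mem_Icc {x θ A B : ℝ} (hA : 0 ≤ A) (hB : B < 1 / 2)
    (hθ : 0 < intDist θ) (hθAB : intDist θ ≤ B - A) :
    ∃ j : ℕ, (j : ℝ) ≤ 1 / intDist θ + 1 ∧ intDist (x + j * θ) ∈ Set.Icc A B := by
  set σ := θ - round θ
  have hσ : intDist θ = |σ| := rfl
  rw [hσ] at hθ hθAB ⊢
  have hwalk : ∃ j : ℕ, (j : ℝ) ≤ 1 / |σ| + 1 ∧ ∃ n : ℤ, |x + j * σ - n| ∈ Set.Icc A B := by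
    rcases lt_or_gt_of_ne (abs_pos.1 hθ) with hneg | hpos
    · rw [abs_of_neg hneg] at hθAB ⊢
      obtain ⟨j, hj, n, hn⟩ :=
        exists_nat_add_mul_sub_intCast_mem_Icc (y := -x) (neg_pos.2 hneg) hθAB
      refine ⟨j, hj, -n, ?_⟩
      rwa [show x + j * σ - ((-n : ℤ) : ℝ) = -(-x + j * -σ - n) by push_cast; ring, abs_neg,
        abs_of_nonneg (hA.trans hn.1)]
    · rw [abs_of_pos hpos] at hθAB ⊢
      obtain ⟨j, hj, n, hn⟩ := exists_nat_add_mul_sub_intCast_mem_Icc (y := x) hpos hθAB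
      exact ⟨j, hj, n, by rwa [abs_of_nonneg (hA.trans hn.1)]⟩
  obtain ⟨j, hj, n, hn⟩ := hwalk
  refine ⟨j, hj, ?_⟩
  rw [show x + j * θ = x + j * σ + ((j * round θ : ℤ) : ℝ) by push_cast; ring,
    intDist_add_intCast, intDist_eq_abs_sub_intCast (hn.2.trans_lt hB)]
  exact hn

lemma exists_nat_le_two_div_intDist_le (ξ : ℝ) {w : ℝ} (hw0 : 0 < w) (hw1 : w ≤ 1) :
    ∃ q : ℕ, 0 < q ∧ (q : ℝ) ≤ 2 / w ∧ intDist (q * ξ) ≤ w := by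
  obtain ⟨q, hq0, hqN, hqw⟩ :=
    Real.exists_nat_abs_mul_sub_round_le ξ (Nat.ceil_pos.2 (one_div_pos.2 hw0))
  have hN : 1 ≤ (⌈1 / w⌉₊ : ℝ) * w := (div_le_iff₀ hw0).1 (Nat.le_ceil _)
  refine ⟨q, hq0, ?_, hqw.trans ?_⟩
  · calc (q : ℝ) ≤ ⌈1 / w⌉₊ := by exact_mod_cast hqN
      _ ≤ 1 / w + 1 := (Nat.ceil_lt_add_one (by positivity)).le
      _ ≤ 2 / w := by
        rw [div_add_one hw0.ne']
        exact div_le_div_of_nonneg_right (by linarith) hw0.le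
  · rw [div_le_iff₀ (by positivity)]
    nlinarith

def HitsWindowsWithin (ξ D : ℝ) (K : ℕ) : Prop :=
  ∀ A B L : ℝ, 0 ≤ A → A < B → B < 1 / 2 → 0 ≤ L →
    ∃ n : ℕ, L ≤ n ∧ (n : ℝ) ≤ L + D / (B - A) ^ K ∧ intDist (n * ξ) ∈ Set.Icc A B

/-- Take `q ≤ 2 / w` with `‖q ξ‖ ≤ w` (Dirichlet), so `‖q ξ‖ ≥ c (w / 2) ^ M`, and walk along the
multiples of `q`. -/
lemma hitsWindowsWithin_of_forall_div_pow_le {ξ c : ℝ} {M : ℕ} (hc : 0 < c)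
    (hLB : ∀ q : ℕ, 0 < q → c / (q : ℝ) ^ M ≤ intDist (q * ξ)) :
    HitsWindowsWithin ξ (4 + 2 ^ (M + 1) / c) (M + 1) := by
  intro A B L hA hAB hB hL
  set w := B - A
  have hw0 : 0 < w := sub_pos.2 hAB
  obtain ⟨q, hq, hq2, hγw⟩ := exists_nat_le_two_div_intDist_le ξ hw0 (by linarith)
  have hq0 : (0 : ℝ) < q := by exact_mod_cast hq
  set γ := intDist (q * ξ)
  have hγ0 : 0 < γ := (by positivity : 0 < c / (q : ℝ) ^ M).trans_le (hLB q hq)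
  set J := ⌈L / q⌉₊
  obtain ⟨j, hj, hjmem⟩ := exists_nat_intDist_add_mul_mem_Icc (x := J * (q * ξ)) hA hB hγ0 hγw
  have hLJ : L ≤ J * q := (div_le_iff₀ hq0).1 (Nat.le_ceil _)
  refine ⟨(J + j) * q, ?_, ?_, ?_⟩
  · push_cast
    nlinarith [(j.cast_nonneg : (0 : ℝ) ≤ j)]
  · have hJ : (J : ℝ) ≤ L / q + 1 := (Nat.ceil_lt_add_one (by positivity)).le
    have hqγ : q / γ ≤ 2 ^ (M + 1) / (c * w ^ (M + 1)) :=
      calc q / γ ≤ q / (c / (q : ℝ) ^ M) :=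
            div_le_div_of_nonneg_left hq0.le (by positivity) (hLB q hq)
        _ = (q : ℝ) ^ (M + 1) / c := by field_simp; ring
        _ ≤ (2 / w) ^ (M + 1) / c := by gcongr
        _ = 2 ^ (M + 1) / (c * w ^ (M + 1)) := by rw [div_pow, div_div, mul_comm]
    have h2q : 2 * (q : ℝ) ≤ 4 / w ^ (M + 1) :=
      calc 2 * (q : ℝ) ≤ 4 / w := by linarith [show 2 * (2 / w) = 4 / w by ring]
        _ ≤ 4 / w ^ (M + 1) := by
          gcongr
          exact pow_le_of_le_one hw0.le (by linarith) (Nat.succ_ne_zero M)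
    push_cast
    calc ((J : ℝ) + j) * q ≤ (L / q + 1 + (1 / γ + 1)) * q := by gcongr
      _ = L + 2 * q + q / γ := by field_simp; ring
      _ ≤ L + (4 + 2 ^ (M + 1) / c) / w ^ (M + 1) := by
        rw [add_div, div_div]
        linarith
  · rw [show (((J + j) * q : ℕ) : ℝ) * ξ = J * (q * ξ) + j * (q * ξ) by push_cast; ring]
    exact hjmem

namespace HitsWindowsWithin

variable {ξ D s : ℝ} {K : ℕ}

lemma exists_start (h : HitsWindowsWithin ξ D K) (hs0 : 0 < s) :
    ∃ v : ℕ, 0 < intDist (v * ξ) ∧ D ≤ s ^ (K + 1) * (v * intDist (v * ξ) ^ K) := by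
  set L := |D| / (s ^ (K + 1) * (1 / 4) ^ K)
  obtain ⟨v, hLv, -, hv⟩ := h (1 / 4) (1 / 3) L (by norm_num) (by norm_num) (by norm_num)
    (by positivity)
  refine ⟨v, (by norm_num : (0 : ℝ) < 1 / 4).trans_le hv.1, ?_⟩
  calc D ≤ |D| := le_abs_self D
    _ = s ^ (K + 1) * (L * (1 / 4) ^ K) := by simp only [L]; field_simp
    _ ≤ s ^ (K + 1) * (v * intDist (v * ξ) ^ K) := by gcongr; exact hv.1

/-- The next term is sought in the window `[(1 - s) ^ 2 ε, (1 - s) ε]` of width `s (1 - s) ε`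
beyond `v / (1 - s) ^ (2K)`, which keeps `v ‖v ξ‖ ^ K` from decreasing. -/
lemma exists_next (h : HitsWindowsWithin ξ D K) (hs0 : 0 < s) (hs1 : s < 1) {v : ℕ}
    (hv0 : 0 < intDist (v * ξ)) (hv : D ≤ s ^ (K + 1) * (v * intDist (v * ξ) ^ K)) :
    ∃ v' : ℕ, v ≤ v' ∧ (v' : ℝ) ≤ (1 + s) / (1 - s) ^ (2 * K) * v ∧
      intDist (v' * ξ) ≤ (1 - s) * intDist (v * ξ) ∧
      0 < intDist (v' * ξ) ∧ D ≤ s ^ (K + 1) * (v' * intDist (v' * ξ) ^ K) := by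
  set ε := intDist (v * ξ)
  have hρ0 : 0 < 1 - s := by linarith
  have hρ1 : 1 - s < 1 := by linarith
  obtain ⟨v', h1, h2, h3⟩ := h ((1 - s) ^ 2 * ε) ((1 - s) * ε) (v / (1 - s) ^ (2 * K))
    (by positivity) (by rw [sq, mul_assoc]; exact mul_lt_of_lt_one_left (by positivity) hρ1)
    ((mul_lt_of_lt_one_left hv0 hρ1).trans_le (intDist_le_half _)) (by positivity)
  have hvv' : (v : ℝ) ≤ v' :=
    (le_div_self (Nat.cast_nonneg v) (by positivity) (pow_le_one₀ hρ0.le hρ1.le)).trans h1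
  have hstep : D / (s * (1 - s) * ε) ^ K ≤ s * (v / (1 - s) ^ (2 * K)) := by
    rw [div_le_iff₀ (by positivity)]
    calc D ≤ s ^ (K + 1) * (v * ε ^ K) := hv
      _ ≤ s ^ (K + 1) * (v * ε ^ K) / (1 - s) ^ K :=
        le_div_self (by positivity) (by positivity) (pow_le_one₀ hρ0.le hρ1.le)
      _ = s * (v / (1 - s) ^ (2 * K)) * (s * (1 - s) * ε) ^ K := by
        rw [mul_pow, mul_pow, pow_succ, pow_mul']
        field_simp
  have hwidth : (1 - s) * ε - (1 - s) ^ 2 * ε = s * (1 - s) * ε := by ring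
  refine ⟨v', by exact_mod_cast hvv', ?_, h3.2, (by positivity : 0 < (1 - s) ^ 2 * ε).trans_le h3.1,
    hv.trans ?_⟩
  · calc (v' : ℝ) ≤ v / (1 - s) ^ (2 * K) + D / (s * (1 - s) * ε) ^ K := hwidth ▸ h2
      _ ≤ v / (1 - s) ^ (2 * K) + s * (v / (1 - s) ^ (2 * K)) := by gcongr
      _ = (1 + s) / (1 - s) ^ (2 * K) * v := by ring
  · gcongr s ^ (K + 1) * ?_
    calc (v : ℝ) * ε ^ K = v / (1 - s) ^ (2 * K) * ((1 - s) ^ 2 * ε) ^ K := by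
          rw [mul_pow, ← pow_mul]
          field_simp
      _ ≤ v' * intDist (v' * ξ) ^ K := by gcongr; exact h3.1

lemma exists_seq (h : HitsWindowsWithin ξ D K) (hs0 : 0 < s) (hs1 : s < 1) :
    ∃ u : ℕ → ℕ, Monotone u ∧ (∀ n, 0 < u n) ∧
      (∀ n, intDist (u (n + 1) * ξ) ≤ (1 - s) * intDist (u n * ξ)) ∧
      ∀ n, (u (n + 1) : ℝ) ≤ (1 + s) / (1 - s) ^ (2 * K) * u n := by
  set Good : ℕ → Prop := fun v =>
    0 < intDist (v * ξ) ∧ D ≤ s ^ (K + 1) * (v * intDist (v * ξ) ^ K)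
  have hnext : ∀ v, Good v → ∃ v', v ≤ v' ∧ (v' : ℝ) ≤ (1 + s) / (1 - s) ^ (2 * K) * v ∧
      intDist (v' * ξ) ≤ (1 - s) * intDist (v * ξ) ∧ Good v' :=
    fun v hv => h.exists_next hs0 hs1 hv.1 hv.2
  choose! next hmono hgrowth hdecay hgood using hnext
  obtain ⟨v₀, hv₀⟩ := h.exists_start hs0
  set u : ℕ → ℕ := fun n => next^[n] v₀
  have hsucc : ∀ n, u (n + 1) = next (u n) := fun n => Function.iterate_succ_apply' _ _ _
  have hu : ∀ n, Good (u n) := by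
    intro n
    induction n with
    | zero => exact hv₀
    | succ n ih => exact hsucc n ▸ hgood _ ih
  refine ⟨u, monotone_nat_of_le_succ fun n => ?_, fun n => Nat.pos_of_ne_zero fun h0 => ?_,
    fun n => ?_, fun n => ?_⟩
  · exact hsucc n ▸ hmono _ (hu n)
  · simpa [h0, intDist] using (hu n).1
  · exact hsucc n ▸ hdecay _ (hu n)
  · exact hsucc n ▸ hgrowth _ (hu n)

end HitsWindowsWithin

section DensityExponent

variable {ξ : ℝ}

lemma densityExponent_nonneg (hξ : Irrational ξ) : 0 ≤ densityExponent ξ :=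
  le_sInf fun _ ⟨_, hu, hpos, hα, hβ, hx⟩ => hx ▸ EReal.coe_nonneg.2 (Real.log_nonneg
    (Real.one_le_sqrt.2 (one_le_toReal_alphaExp_mul_toReal_betaExp hξ hu hpos hα hβ)))

lemma densityExponent_le_of_forall {u : ℕ → ℕ} {r b : ℝ} (hξ : Irrational ξ) (hu : Monotone u)
    (hpos : ∀ n, 0 < u n) (hr : r < 1)
    (hε : ∀ n, intDist (u (n + 1) * ξ) ≤ r * intDist (u n * ξ))
    (hb : ∀ n, (u (n + 1) : ℝ) ≤ b * u n) :
    densityExponent ξ ≤ Real.log (Real.sqrt (r * b)) := by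
  have hα : alphaExp ξ u ≤ r := limsup_le_of_le (by isBoundedDefault) (Eventually.of_forall
    fun n => EReal.coe_le_coe_iff.2 ((div_le_iff₀ (hξ.intDist_natCast_mul_pos (hpos n))).2 (hε n)))
  have hβ : betaExp u ≤ b := limsup_le_of_le (by isBoundedDefault) (Eventually.of_forall
    fun n => EReal.coe_le_coe_iff.2 ((div_le_iff₀ (by exact_mod_cast hpos n)).2 (hb n)))
  have hα1 : alphaExp ξ u < 1 := hα.trans_lt (by exact_mod_cast hr)
  have hβ' : betaExp u < ⊤ := hβ.trans_lt (EReal.coe_lt_top b)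
  have hα0 := zero_le_alphaExp ξ u
  have hβ1 := one_le_betaExp hu hpos
  have hαr : (alphaExp ξ u).toReal ≤ r := by
    simpa using EReal.toReal_le_toReal hα (ne_bot_of_le_ne_bot EReal.zero_ne_bot hα0)
      (EReal.coe_ne_top r)
  have hβb : (betaExp u).toReal ≤ b := by
    simpa using EReal.toReal_le_toReal hβ (ne_bot_of_gt (zero_lt_one.trans_le hβ1))
      (EReal.coe_ne_top b)
  have h1 := one_le_toReal_alphaExp_mul_toReal_betaExp hξ hu hpos hα1 hβ'
  have hle : densityExponent ξ ≤
      (Real.log (Real.sqrt ((alphaExp ξ u).toReal * (betaExp u).toReal)) : EReal) :=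
    sInf_le ⟨u, hu, hpos, hα1, hβ', rfl⟩
  refine hle.trans (EReal.coe_le_coe_iff.2 ?_)
  have hr0 := (EReal.toReal_nonneg hα0).trans hαr
  exact Real.log_le_log (Real.sqrt_pos.2 (by linarith)) (Real.sqrt_le_sqrt
    (mul_le_mul hαr hβb (EReal.toReal_nonneg (zero_le_one.trans hβ1)) hr0))

lemma densityExponent_nonpos (hξ : Irrational ξ) (hI : irrationalityExponent ξ ≠ ⊤) :
    densityExponent ξ ≤ 0 := by
  obtain ⟨c, hc, M, hLB⟩ := exists_forall_div_pow_le_intDist hξ hI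
  set f : ℝ → ℝ := fun s => Real.log (Real.sqrt ((1 - s) * ((1 + s) / (1 - s) ^ (2 * (M + 1)))))
  have hf : Tendsto (fun s => (f s : EReal)) (𝓝[>] 0) (𝓝 0) := by
    have hcont : ContinuousAt f 0 := by fun_prop (disch := norm_num)
    have hf0 : f 0 = 0 := by simp [f]
    have h := (continuous_coe_real_ereal.tendsto _).comp
      (hcont.tendsto.mono_left (nhdsWithin_le_nhds (s := Set.Ioi 0)))
    rwa [hf0, EReal.coe_zero] at h
  refine ge_of_tendsto hf ?_
  filter_upwards [Ioo_mem_nhdsGT one_pos] with s ⟨hs0, hs1⟩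
  obtain ⟨u, hu, hpos, hε, hb⟩ := (hitsWindowsWithin_of_forall_div_pow_le hc hLB).exists_seq hs0 hs1
  exact densityExponent_le_of_forall hξ hu hpos (by linarith) hε hb

end DensityExponent

theorem density_exponent_dichotomy (ξ : ℝ) (hξ : Irrational ξ) :
    (irrationalityExponent ξ = ⊤ → densityExponent ξ = ⊤) ∧
    (irrationalityExponent ξ ≠ ⊤ → densityExponent ξ = 0) := by
  refine ⟨fun hI => sInf_eq_top.2 ?_, fun hI =>
    le_antisymm (densityExponent_nonpos hξ hI) (densityExponent_nonneg hξ)⟩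
  rintro _ ⟨u, hu, hpos, hα, hβ, -⟩
  exact absurd hI (irrationalityExponent_ne_top_of_admissible hξ hu hpos hα hβ)
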